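/- arXiv:2503.06779 — 4 statements merged into one kernel-verified Lean document; each statement's English description precedes it below -/
import Mathlib

section
/- Let δ be a real-valued random variable and ε ∈ (0,1). If CVaR_ε(δ) := inf_{α>0} ( (1/ε)·E[(δ + α)_+] − α ) ≤ 0, then P(δ ≤ 0) ≥ 1 − ε. That is, the CVaR constraint is a conservative approximation of the chance constraint. -/
open MeasureTheory ProbabilityTheory Matrix

/-- CDF of the standard normal distribution. -/
noncomputable def stdCDF (t : ℝ) : ℝ := cdf (gaussianReal 0 1) t

/-- Quantile (inverse CDF) of the standard normal distribution. -/
noncomputable def stdQuantile (p : ℝ) : ℝ := sInf {t : ℝ | p ≤ stdCDF t}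

/-- Density of the standard normal distribution. -/
noncomputable def stdPDF (t : ℝ) : ℝ := Real.exp (-t ^ 2 / 2) / Real.sqrt (2 * Real.pi)

/-- Conditional Value-at-Risk at level ε (Rockafellar–Uryasev form). -/
noncomputable def cvar {Ω : Type*} [MeasurableSpace Ω] (P : Measure Ω) (Z : Ω → ℝ)
    (ε : ℝ) : ℝ := ⨅ α : ℝ, (ε⁻¹ * ∫ ω, max (Z ω + α) 0 ∂P - α)

/-! Pointwise, `(δ + α)₊ ≥ δ₊ + α·1{δ > 0}` for `α ≥ 0`. Hence if `P(δ > 0) ≥ ε`, every value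
`ε⁻¹ E[(δ + α)₊] - α` of the Rockafellar–Uryasev objective is at least `ε⁻¹ E[δ₊]`, which is
positive because `δ₊` is nonnegative with support of positive measure; so the infimum is
positive. -/

section RockafellarUryasev

variable {Ω : Type*} [MeasurableSpace Ω] {μ : Measure Ω} {f : Ω → ℝ}

lemma max_add_indicator_le_max_add (x : ℝ) {α : ℝ} (hα : 0 ≤ α) :
    max x 0 + {y : ℝ | 0 < y}.indicator (fun _ => α) x ≤ max (x + α) 0 := by
  by_cases hx : 0 < x
  · simp [hx, hx.le, add_nonneg hx.le hα]
  · rw [Set.indicator_of_notMem (by exact hx), add_zero]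
    gcongr
    linarith

lemma integral_max_add_measureReal_pos_le [IsFiniteMeasure μ] (hf : Integrable f μ) {α : ℝ}
    (hα : 0 ≤ α) :
    ∫ ω, max (f ω) 0 ∂μ + α * μ.real {ω | 0 < f ω} ≤ ∫ ω, max (f ω + α) 0 ∂μ := by
  have hs : NullMeasurableSet {ω | 0 < f ω} μ :=
    nullMeasurableSet_lt aemeasurable_const hf.aemeasurable
  have hind : ∫ ω, {ω | 0 < f ω}.indicator (fun _ => α) ω ∂μ = α * μ.real {ω | 0 < f ω} := by
    rw [integral_indicator₀ hs, setIntegral_const, smul_eq_mul, mul_comm]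
  rw [← hind, ← integral_add hf.pos_part ((integrable_const α).indicator₀ hs)]
  exact integral_mono (hf.pos_part.add ((integrable_const α).indicator₀ hs))
    (hf.add (integrable_const α)).pos_part fun ω => max_add_indicator_le_max_add (f ω) hα

lemma integral_max_pos_of_measure_pos (hf : Integrable f μ) (h : 0 < μ {ω | 0 < f ω}) :
    0 < ∫ ω, max (f ω) 0 ∂μ := by
  rw [integral_pos_iff_support_of_nonneg_ae (f := fun ω => max (f ω) 0)
    (ae_of_all _ fun ω => le_max_right _ _) hf.pos_part]
  convert h using 3
  ext ω
  simp [Function.mem_support]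

lemma inv_mul_integral_max_le_of_le_measureReal_pos [IsFiniteMeasure μ] (hf : Integrable f μ)
    {ε α : ℝ} (hε : 0 < ε) (hp : ε ≤ μ.real {ω | 0 < f ω}) (hα : 0 ≤ α) :
    ε⁻¹ * ∫ ω, max (f ω) 0 ∂μ ≤ ε⁻¹ * ∫ ω, max (f ω + α) 0 ∂μ - α := by
  have hαp : α ≤ ε⁻¹ * (α * μ.real {ω | 0 < f ω}) := by
    rw [le_inv_mul_iff₀ hε]
    nlinarith
  have := mul_le_mul_of_nonneg_left (integral_max_add_measureReal_pos_le hf hα)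
    (inv_nonneg.2 hε.le)
  linarith [mul_add ε⁻¹ (∫ ω, max (f ω) 0 ∂μ) (α * μ.real {ω | 0 < f ω})]

end RockafellarUryasev

theorem cvar_le_zero_implies_chance_general {Ω : Type*} [MeasurableSpace Ω] (P : Measure Ω)
    [IsProbabilityMeasure P] (δ : Ω → ℝ) (hδ : Integrable δ P)
    (ε : ℝ) (hε : 0 < ε)
    (h : sInf {v : ℝ | ∃ α : ℝ, 0 < α ∧ v = ε⁻¹ * ∫ ω, max (δ ω + α) 0 ∂P - α} ≤ 0) :
    (P {ω | δ ω ≤ 0}).toReal ≥ 1 - ε := by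
  have hexceed : P.real {ω | 0 < δ ω} < ε := by
    by_contra! hp
    have hP : 0 < P {ω | 0 < δ ω} := (ENNReal.toReal_pos_iff.1 (hε.trans_le hp)).1
    have hlow : ε⁻¹ * ∫ ω, max (δ ω) 0 ∂P ≤
        sInf {v : ℝ | ∃ α : ℝ, 0 < α ∧ v = ε⁻¹ * ∫ ω, max (δ ω + α) 0 ∂P - α} :=
      le_csInf ⟨_, 1, one_pos, rfl⟩ fun v ⟨α, hα, hv⟩ =>
        hv ▸ inv_mul_integral_max_le_of_le_measureReal_pos hδ hε hp hα.le
    have hpos := mul_pos (inv_pos.2 hε) (integral_max_pos_of_measure_pos hδ hP)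
    linarith
  have hcompl : P.real {ω | δ ω ≤ 0} = 1 - P.real {ω | 0 < δ ω} := by
    rw [← probReal_compl_eq_one_sub₀ (nullMeasurableSet_lt aemeasurable_const hδ.aemeasurable)]
    congr 1
    ext ω
    simp
  rw [← measureReal_def, hcompl]
  linarith

/-- CVaR constraint (with infimum over α > 0) is a conservative approximation of the
chance constraint. -/
theorem cvar_le_zero_implies_chance {Ω : Type*} [MeasurableSpace Ω] (P : Measure Ω)
    [IsProbabilityMeasure P] (δ : Ω → ℝ) (hδ : Integrable δ P)
    (ε : ℝ) (hε : 0 < ε) (hε1 : ε < 1)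
    (h : sInf {v : ℝ | ∃ α : ℝ, 0 < α ∧ v = ε⁻¹ * ∫ ω, max (δ ω + α) 0 ∂P - α} ≤ 0) :
    (P {ω | δ ω ≤ 0}).toReal ≥ 1 - ε :=
  cvar_le_zero_implies_chance_general P δ hδ ε hε h
end

section
/- Let Z be an integrable real random variable and ε ∈ (0,1). Then CVaR_ε(Z) := inf_{α ∈ ℝ} ( (1/ε)·E[(Z + α)_+] − α ) ≥ VaR_ε(Z), where VaR_ε(Z) is the (1−ε)-quantile of Z. In particular, CVaR_ε(Z) ≤ 0 implies that the (1−ε)-quantile of Z is at most 0. -/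
open MeasureTheory ProbabilityTheory Matrix

/-- CVaR dominates VaR; in particular CVaR ≤ 0 implies the (1-ε)-quantile is ≤ 0. -/
theorem cvar_ge_var {Ω : Type*} [MeasurableSpace Ω] (P : Measure Ω)
    [IsProbabilityMeasure P] (Z : Ω → ℝ) (hZ : Integrable Z P)
    (ε : ℝ) (hε : 0 < ε) (hε1 : ε < 1) :
    cvar P Z ε ≥ sInf {t : ℝ | (P {ω | Z ω ≤ t}).toReal ≥ 1 - ε} ∧
      (cvar P Z ε ≤ 0 → sInf {t : ℝ | (P {ω | Z ω ≤ t}).toReal ≥ 1 - ε} ≤ 0) := by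
  set S : Set ℝ := {t : ℝ | (P {ω | Z ω ≤ t}).toReal ≥ 1 - ε} with hS
  -- boundedness below of S
  have hεpos : (0:ℝ) < 1 - ε := by linarith
  have hnegint : Integrable (fun ω => max (-Z ω) 0) P := hZ.neg.pos_part
  have hnegnn : 0 ≤ᵐ[P] fun ω => max (-Z ω) 0 := Filter.Eventually.of_forall fun ω => le_max_right _ _
  set M : ℝ := ∫ ω, max (-Z ω) 0 ∂P with hM
  have hMnn : 0 ≤ M := integral_nonneg fun ω => le_max_right _ _
  set t0 : ℝ := -(M / (1 - ε) + 1) with ht0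
  have ht0neg : t0 < 0 := by
    have : 0 < M / (1 - ε) + 1 := by positivity
    simpa [ht0] using neg_neg_of_pos this
  have ht0not : (P {ω | Z ω ≤ t0}).toReal < 1 - ε := by
    have hsub : {ω | Z ω ≤ t0} ⊆ {ω | -t0 ≤ max (-Z ω) 0} := by
      intro ω hω
      simp only [Set.mem_setOf_eq] at hω ⊢
      exact le_max_of_le_left (by linarith)
    have hmarkov := mul_meas_ge_le_integral_of_nonneg hnegnn hnegint (-t0)
    have hmono : (P {ω | Z ω ≤ t0}).toReal ≤ (P {ω | -t0 ≤ max (-Z ω) 0}).toReal := by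
      exact ENNReal.toReal_mono (measure_ne_top _ _) (measure_mono hsub)
    have hpos : (0:ℝ) < -t0 := by linarith
    have h1 : (P {ω | -t0 ≤ max (-Z ω) 0}).toReal ≤ M / (-t0) := by
      rw [le_div_iff₀ hpos]
      rw [measureReal_def] at hmarkov
      linarith [hmarkov]
    have h2 : M / (-t0) < 1 - ε := by
      rw [div_lt_iff₀ hpos]
      have : -t0 = M / (1 - ε) + 1 := by simp [ht0]
      rw [this, mul_add, mul_one]
      have : (1 - ε) * (M / (1 - ε)) = M := mul_div_cancel₀ M (by linarith)
      linarith [this, hεpos]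
    linarith
  have hbdd : BddBelow S := by
    refine ⟨t0, fun t ht => ?_⟩
    by_contra h
    push_neg at h
    have hmono : (P {ω | Z ω ≤ t}).toReal ≤ (P {ω | Z ω ≤ t0}).toReal :=
      ENNReal.toReal_mono (measure_ne_top _ _)
        (measure_mono fun ω hω => le_trans hω h.le)
    have := ht
    simp only [hS, Set.mem_setOf_eq] at this
    linarith
  -- main claim: for each α, sInf S ≤ g α
  have hmain : ∀ α : ℝ, sInf S ≤ ε⁻¹ * ∫ ω, max (Z ω + α) 0 ∂P - α := by
    intro α
    set c : ℝ := ε⁻¹ * ∫ ω, max (Z ω + α) 0 ∂P with hc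
    have hintnn : 0 ≤ᵐ[P] fun ω => max (Z ω + α) 0 :=
      Filter.Eventually.of_forall fun ω => le_max_right _ _
    have hint : Integrable (fun ω => max (Z ω + α) 0) P :=
      (hZ.add (integrable_const α)).pos_part
    have hInn : 0 ≤ ∫ ω, max (Z ω + α) 0 ∂P := integral_nonneg fun ω => le_max_right _ _
    have hcnn : 0 ≤ c := by
      apply mul_nonneg (by positivity) hInn
    refine csInf_le hbdd ?_
    show (P {ω | Z ω ≤ c - α}).toReal ≥ 1 - ε
    rcases eq_or_lt_of_le hcnn with hc0 | hcpos
    · -- c = 0 : integral is 0, so Z ≤ -α a.e.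
      have hI0 : ∫ ω, max (Z ω + α) 0 ∂P = 0 := by
        have := hc0.symm
        rw [hc] at this
        rcases mul_eq_zero.mp this with h | h
        · exact absurd h (by positivity)
        · exact h
      have hae : (fun ω => max (Z ω + α) 0) =ᵐ[P] 0 :=
        (integral_eq_zero_iff_of_nonneg_ae hintnn hint).mp hI0
      have hsub : ∀ᵐ ω ∂P, ω ∈ {ω | Z ω ≤ c - α} := by
        filter_upwards [hae] with ω hω
        simp only [Pi.zero_apply] at hω
        have : Z ω + α ≤ 0 := by
          by_contra h
          push_neg at h
          rw [max_eq_left h.le] at hω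
          linarith
        show Z ω ≤ c - α
        linarith
      have h1 : P {ω | Z ω ≤ c - α} = 1 := by
        refine le_antisymm prob_le_one ?_
        rw [← measure_univ (μ := P)]
        refine measure_mono_ae ?_
        filter_upwards [hsub] with ω hω using fun _ => hω
      rw [h1, ENNReal.toReal_one]
      linarith
    · -- c > 0 : Markov
      have hmarkov := mul_meas_ge_le_integral_of_nonneg hintnn hint c
      have hEc : ∫ ω, max (Z ω + α) 0 ∂P = ε * c := by
        rw [hc]; field_simp
      have hPle : (P {ω | c ≤ max (Z ω + α) 0}).toReal ≤ ε := by
        rw [hEc] at hmarkov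
        have h2 : c * (P {ω | c ≤ max (Z ω + α) 0}).toReal ≤ c * ε := by
          rw [measureReal_def] at hmarkov
          linarith [hmarkov]
        exact (mul_le_mul_iff_right₀ hcpos).mp h2
      have hcompl : {ω | Z ω ≤ c - α}ᶜ ⊆ {ω | c ≤ max (Z ω + α) 0} := by
        intro ω hω
        simp only [Set.mem_compl_iff, Set.mem_setOf_eq, not_le] at hω ⊢
        exact le_max_of_le_left (by linarith)
      have hsplit : (1:ℝ) ≤ (P {ω | Z ω ≤ c - α}).toReal + (P {ω | Z ω ≤ c - α}ᶜ).toReal := by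
        have h1 : P Set.univ ≤ P {ω | Z ω ≤ c - α} + P {ω | Z ω ≤ c - α}ᶜ := by
          rw [← Set.union_compl_self {ω | Z ω ≤ c - α}]
          exact measure_union_le _ _
        have h2 := ENNReal.toReal_mono
          (ENNReal.add_ne_top.mpr ⟨measure_ne_top _ _, measure_ne_top _ _⟩) h1
        rw [measure_univ, ENNReal.toReal_one,
          ENNReal.toReal_add (measure_ne_top _ _) (measure_ne_top _ _)] at h2
        exact h2
      have hcle : (P {ω | Z ω ≤ c - α}ᶜ).toReal ≤ ε :=
        le_trans (ENNReal.toReal_mono (measure_ne_top _ _) (measure_mono hcompl)) hPle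
      linarith
  have h1 : sInf S ≤ cvar P Z ε := by
    rw [cvar]
    exact le_ciInf hmain
  exact ⟨h1, fun h => le_trans h1 h⟩
end

section
/- Let δ be distributed according to a K-mode Gaussian mixture with modes N(μ_k, Σ_k), Σ_k ≻ 0, and weights π_k. Fix x̃ with x̃ᵀΣ_kx̃ > 0 for all k, and risk levels ε_k ∈ (0, 1/2) with Σ_k π_k ε_k = ε. If Ψ⁻¹(1−ε_k)·√(x̃ᵀΣ_kx̃) + μ_kᵀx̃ ≤ 0 for all k, then P_{δ~p_*}(δᵀx̃ ≤ 0) ≥ 1 − ε. -/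
open MeasureTheory ProbabilityTheory Matrix

/-! Under each mode, `δ ⬝ᵥ x` is Gaussian with mean `μₖ ⬝ᵥ x` and standard deviation
`σₖ = √(xᵀ Σₖ x)`, so the half-space `{δ ⬝ᵥ x ≤ 0}` has probability `Φ(-μₖ ⬝ᵥ x / σₖ)`. The
second-order-cone constraint says `Ψ⁻¹(1 - εₖ) ≤ -μₖ ⬝ᵥ x / σₖ`, hence this probability is at least
`Φ(Ψ⁻¹(1 - εₖ)) ≥ 1 - εₖ`. Averaging over the modes with the weights `πₖ` gives `1 - ∑ πₖ εₖ`. -/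

open Filter Set

theorem StieltjesFunction.le_apply_csInf (f : StieltjesFunction ℝ) {p : ℝ}
    (hne : {t | p ≤ f t}.Nonempty) (hbdd : BddBelow {t | p ≤ f t}) :
    p ≤ f (sInf {t | p ≤ f t}) := by
  set q := sInf {t | p ≤ f t}
  have h_right : ∀ t ∈ Ioi q, p ≤ f t := fun t ht ↦ by
    obtain ⟨s, hs, hst⟩ := (csInf_lt_iff hbdd hne).mp ht
    exact hs.trans (f.mono hst.le)
  exact ge_of_tendsto ((f.right_continuous q).mono Ioi_subset_Ici_self)
    (eventually_nhdsWithin_of_forall h_right)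

theorem ProbabilityTheory.le_cdf_csInf (μ : Measure ℝ) [IsProbabilityMeasure μ] {p : ℝ}
    (hp₀ : 0 < p) (hp₁ : p < 1) : p ≤ cdf μ (sInf {t | p ≤ cdf μ t}) := by
  refine (cdf μ).le_apply_csInf ?_ ?_
  · exact ((tendsto_cdf_atTop (μ := μ)).eventually (eventually_ge_nhds hp₁)).exists
  · obtain ⟨b, hb⟩ := eventually_atBot.mp
      ((tendsto_cdf_atBot (μ := μ)).eventually (eventually_lt_nhds hp₀))
    exact ⟨b, fun t ht ↦ le_of_not_gt fun htb ↦ (hb t htb.le).not_ge ht⟩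

theorem le_stdCDF_stdQuantile {p : ℝ} (hp₀ : 0 < p) (hp₁ : p < 1) :
    p ≤ stdCDF (stdQuantile p) :=
  le_cdf_csInf _ hp₀ hp₁

theorem gaussianReal_Iic_toReal (m : ℝ) {v : NNReal} (hv : 0 < v) (c : ℝ) :
    (gaussianReal m v (Iic c)).toReal = stdCDF ((c - m) / Real.sqrt v) := by
  have hσ : 0 < Real.sqrt v := Real.sqrt_pos.mpr hv
  have h_std : gaussianReal m v = ((gaussianReal 0 1).map (Real.sqrt v * ·)).map (· + m) := by
    rw [gaussianReal_map_const_mul, gaussianReal_map_add_const]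
    congr 1
    · ring
    · ext; simp
  have h_preimage : (Real.sqrt v * ·) ⁻¹' ((· + m) ⁻¹' Iic c) = Iic ((c - m) / Real.sqrt v) := by
    ext t
    simp only [mem_preimage, mem_Iic, le_div_iff₀ hσ]
    constructor <;> intro h <;> linarith
  rw [h_std, Measure.map_apply (by fun_prop) measurableSet_Iic,
    Measure.map_apply (by fun_prop) (measurableSet_Iic.preimage (by fun_prop)), h_preimage,
    stdCDF, cdf_eq_real, measureReal_def]

theorem one_sub_le_gaussianReal_Iic {m c ε : ℝ} {v : NNReal} (hv : 0 < v) (hε₀ : 0 < ε)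
    (hε₁ : ε < 1) (hsoc : stdQuantile (1 - ε) * Real.sqrt v + m ≤ c) :
    1 - ε ≤ (gaussianReal m v (Iic c)).toReal := by
  have hσ : 0 < Real.sqrt v := Real.sqrt_pos.mpr hv
  rw [gaussianReal_Iic_toReal m hv]
  refine (le_stdCDF_stdQuantile (by linarith) (by linarith)).trans (monotone_cdf _ ?_)
  rw [le_div_iff₀ hσ]
  linarith

theorem one_sub_sum_mul_le_sum_mul {ι : Type*} [Fintype ι] {π a ε : ι → ℝ}
    (hπ : ∀ i, 0 ≤ π i) (hsum : ∑ i, π i = 1) (h : ∀ i, 1 - ε i ≤ a i) :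
    1 - ∑ i, π i * ε i ≤ ∑ i, π i * a i :=
  calc 1 - ∑ i, π i * ε i = ∑ i, π i * (1 - ε i) := by
        simp only [mul_sub, Finset.sum_sub_distrib, mul_one, hsum]
    _ ≤ ∑ i, π i * a i := Finset.sum_le_sum fun i _ ↦ mul_le_mul_of_nonneg_left (h i) (hπ i)

theorem gmm_soc_implies_chance_general {n K : ℕ} (p : Fin K → Measure (Fin n → ℝ))
    (P : Measure (Fin n → ℝ))
    (π : Fin K → ℝ) (hπ : ∀ k, 0 ≤ π k) (hsum : ∑ k, π k = 1)
    (hmix : ∀ A : Set (Fin n → ℝ), MeasurableSet A →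
      (P A).toReal = ∑ k, π k * ((p k) A).toReal)
    (μv : Fin K → Fin n → ℝ) (S : Fin K → Matrix (Fin n) (Fin n) ℝ)
    (x : Fin n → ℝ)
    (hvar : ∀ k, 0 < x ⬝ᵥ (S k).mulVec x)
    (hlaw : ∀ k, Measure.map (fun v => v ⬝ᵥ x) (p k)
      = gaussianReal (μv k ⬝ᵥ x) ⟨x ⬝ᵥ (S k).mulVec x, (hvar k).le⟩)
    (ε : Fin K → ℝ) (hεk : ∀ k, 0 < ε k ∧ ε k < 1 / 2)
    (εt : ℝ) (hεt : ∑ k, π k * ε k = εt)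
    (hsoc : ∀ k, stdQuantile (1 - ε k) * Real.sqrt (x ⬝ᵥ (S k).mulVec x)
      + μv k ⬝ᵥ x ≤ 0) :
    (P {v | v ⬝ᵥ x ≤ 0}).toReal ≥ 1 - εt := by
  have hproj : Measurable fun v : Fin n → ℝ ↦ v ⬝ᵥ x := by fun_prop
  have h_halfspace : {v : Fin n → ℝ | v ⬝ᵥ x ≤ 0} = (· ⬝ᵥ x) ⁻¹' Iic 0 := rfl
  have h_meas : MeasurableSet {v : Fin n → ℝ | v ⬝ᵥ x ≤ 0} := hproj measurableSet_Iic
  have h_mode : ∀ k, 1 - ε k ≤ (p k {v | v ⬝ᵥ x ≤ 0}).toReal := fun k ↦ by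
    rw [h_halfspace, ← Measure.map_apply hproj measurableSet_Iic, hlaw k]
    exact one_sub_le_gaussianReal_Iic (hvar k) (hεk k).1 (by linarith [(hεk k).2]) (hsoc k)
  rw [hmix _ h_meas, ← hεt]
  exact one_sub_sum_mul_le_sum_mul hπ hsum h_mode

/-- Second-order-cone constraints for each Gaussian mode imply the mixture chance
constraint. -/
theorem gmm_soc_implies_chance {n K : ℕ} (p : Fin K → Measure (Fin n → ℝ))
    [∀ k, IsProbabilityMeasure (p k)] (P : Measure (Fin n → ℝ)) [IsProbabilityMeasure P]
    (π : Fin K → ℝ) (hπ : ∀ k, 0 ≤ π k) (hsum : ∑ k, π k = 1)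
    (hmix : ∀ A : Set (Fin n → ℝ), MeasurableSet A →
      (P A).toReal = ∑ k, π k * ((p k) A).toReal)
    (μv : Fin K → Fin n → ℝ) (S : Fin K → Matrix (Fin n) (Fin n) ℝ)
    (hS : ∀ k, (S k).PosDef) (x : Fin n → ℝ)
    (hvar : ∀ k, 0 < x ⬝ᵥ (S k).mulVec x)
    (hlaw : ∀ k, Measure.map (fun v => v ⬝ᵥ x) (p k)
      = gaussianReal (μv k ⬝ᵥ x) ⟨x ⬝ᵥ (S k).mulVec x, (hvar k).le⟩)
    (ε : Fin K → ℝ) (hεk : ∀ k, 0 < ε k ∧ ε k < 1 / 2)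
    (εt : ℝ) (hεt : ∑ k, π k * ε k = εt)
    (hsoc : ∀ k, stdQuantile (1 - ε k) * Real.sqrt (x ⬝ᵥ (S k).mulVec x)
      + μv k ⬝ᵥ x ≤ 0) :
    (P {v | v ⬝ᵥ x ≤ 0}).toReal ≥ 1 - εt :=
  gmm_soc_implies_chance_general p P π hπ hsum hmix μv S x hvar hlaw ε hεk εt hεt hsoc
end

section
/- Let δ ~ N(μ, σ²) with σ > 0 and ε ∈ (0, 1/2). If μ + σ·φ(Ψ⁻¹(1−ε))/ε ≤ 0 (the CVaR condition), then μ + σ·Ψ⁻¹(1−ε) ≤ 0, and hence P(δ ≤ 0) ≥ 1 − ε: the deterministic CVaR reformulation implies the deterministic chance-constraint reformulation. -/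
open MeasureTheory ProbabilityTheory Matrix

/-!
For `q = Ψ⁻¹(1 - ε)` the upper tail `1 - Φ(q)` equals `ε`, and `q > 0` because `ε < 1/2`.
Integrating `x φ(x) = -φ'(x)` over `(q, ∞)` gives the Mills-ratio bound `q (1 - Φ(q)) ≤ φ(q)`,
i.e. `q ≤ φ(q) / ε`, so the CVaR condition forces `μ + σ q ≤ 0`. Finally
`P(δ ≤ 0) = Φ(-μ / σ) ≥ Φ(q) = 1 - ε`.
-/

open Set Filter Topology
open scoped NNReal

namespace ProbabilityTheory

variable {μ : Measure ℝ} [IsProbabilityMeasure μ]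

lemma leftLim_cdf [NullSingletonClass μ] (x : ℝ) : Function.leftLim (cdf μ) x = cdf μ x := by
  have hjump := (cdf μ).measure_singleton x
  rw [measure_cdf, measure_singleton, eq_comm, ENNReal.ofReal_eq_zero] at hjump
  exact le_antisymm ((cdf μ).mono.leftLim_le le_rfl) (sub_nonpos.mp hjump)

lemma continuous_cdf [NullSingletonClass μ] : Continuous (cdf μ) := by
  refine continuous_iff_continuousAt.mpr fun x => ?_
  rw [(cdf μ).mono.continuousAt_iff_leftLim_eq_rightLim, leftLim_cdf,
    ((cdf μ).right_continuous x).rightLim_eq]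

lemma cdf_sInf_setOf_le_cdf [NullSingletonClass μ] {p : ℝ} (hp0 : 0 < p) (hp1 : p < 1) :
    cdf μ (sInf {t | p ≤ cdf μ t}) = p := by
  set S := {t | p ≤ cdf μ t}
  obtain ⟨b, hb⟩ := ((tendsto_cdf_atTop μ).eventually (eventually_ge_nhds hp1)).exists
  obtain ⟨a, ha⟩ :=
    eventually_atBot.mp ((tendsto_cdf_atBot μ).eventually (eventually_lt_nhds hp0))
  have hbdd : BddBelow S := ⟨a, fun t ht => le_of_not_gt fun hta => (ha t hta.le).not_ge ht⟩
  have hmem : sInf S ∈ S :=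
    (isClosed_le continuous_const continuous_cdf).csInf_mem ⟨b, hb⟩ hbdd
  -- by the intermediate value theorem `cdf μ` attains `p`, which bounds `cdf μ (sInf S)` above
  obtain ⟨c, hc⟩ := intermediate_value_univ a b continuous_cdf ⟨(ha a le_rfl).le, hb⟩
  have hcS : c ∈ S := hc.ge
  exact le_antisymm (hc ▸ (cdf μ).mono (csInf_le hbdd hcS)) hmem

lemma cdf_add_measureReal_Ioi (x : ℝ) : cdf μ x + μ.real (Ioi x) = 1 := by
  rw [cdf_eq_real, ← compl_Iic, measureReal_add_measureReal_compl measurableSet_Iic, probReal_univ]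

lemma cdf_zero_of_map_neg [NullSingletonClass μ] (h : μ.map (fun x => -x) = μ) :
    cdf μ 0 = 1 / 2 := by
  have hsymm : μ.real (Iic 0) = μ.real (Ioi 0) := by
    conv_lhs => rw [← h]
    rw [map_measureReal_apply measurable_neg measurableSet_Iic, neg_preimage, neg_Iic, neg_zero]
    exact measureReal_congr Ioi_ae_eq_Ici.symm
  linarith [cdf_add_measureReal_Ioi (μ := μ) 0, cdf_eq_real μ 0]

end ProbabilityTheory

open ProbabilityTheory

instance : NullSingletonClass (gaussianReal 0 1) := nullSingletonClass_gaussianReal one_ne_zero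

lemma stdPDF_eq_gaussianPDFReal : stdPDF = gaussianPDFReal 0 1 := by
  funext x
  simp [stdPDF, gaussianPDFReal, div_eq_inv_mul]

lemma hasDerivAt_stdPDF (x : ℝ) : HasDerivAt stdPDF (-x * stdPDF x) x := by
  have hexp : HasDerivAt (fun y : ℝ => -y ^ 2 / 2) (-x) x := by
    refine ((hasDerivAt_pow 2 x).fun_neg.div_const 2).congr_deriv ?_
    ring
  refine (hexp.exp.div_const (Real.sqrt (2 * Real.pi))).congr_deriv ?_
  rw [stdPDF]
  ring

lemma tendsto_stdPDF_atTop : Tendsto stdPDF atTop (𝓝 0) := by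
  have hexp : Tendsto (fun y : ℝ => -y ^ 2 / 2) atTop atBot :=
    (tendsto_neg_atTop_atBot.comp (tendsto_pow_atTop two_ne_zero)).atBot_div_const two_pos
  have hpdf := (Real.tendsto_exp_atBot.comp hexp).div_const (Real.sqrt (2 * Real.pi))
  rw [zero_div] at hpdf
  exact hpdf

lemma one_sub_stdCDF (t : ℝ) : 1 - stdCDF t = ∫ x in Ioi t, stdPDF x := by
  rw [← cdf_add_measureReal_Ioi (μ := gaussianReal 0 1) t, stdCDF, add_sub_cancel_left,
    measureReal_def, gaussianReal_apply_eq_integral 0 one_ne_zero, stdPDF_eq_gaussianPDFReal,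
    ENNReal.toReal_ofReal
      (setIntegral_nonneg measurableSet_Ioi fun x _ => gaussianPDFReal_nonneg 0 1 x)]

lemma mul_integral_Ioi_stdPDF_le {q : ℝ} (hq : 0 ≤ q) :
    q * ∫ x in Ioi q, stdPDF x ≤ stdPDF q := by
  have hnonneg (x : ℝ) : 0 ≤ stdPDF x := stdPDF_eq_gaussianPDFReal ▸ gaussianPDFReal_nonneg 0 1 x
  have hint : Integrable stdPDF := stdPDF_eq_gaussianPDFReal ▸ integrable_gaussianPDFReal 0 1
  have hderiv : ∀ x ∈ Ici q, HasDerivAt (fun y => -stdPDF y) (x * stdPDF x) x := fun x _ => by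
    simpa using (hasDerivAt_stdPDF x).fun_neg
  have hpos : ∀ x ∈ Ioi q, 0 ≤ x * stdPDF x := fun x hx =>
    mul_nonneg (hq.trans hx.le) (hnonneg x)
  have hlim : Tendsto (fun y => -stdPDF y) atTop (𝓝 0) := by simpa using tendsto_stdPDF_atTop.neg
  have hval := integral_Ioi_of_hasDerivAt_of_nonneg' hderiv hpos hlim
  rw [zero_sub, neg_neg] at hval
  rw [← hval, ← integral_const_mul]
  refine setIntegral_mono_on ((hint.const_mul q).integrableOn)
    (integrableOn_Ioi_deriv_of_nonneg' hderiv hpos hlim) measurableSet_Ioi fun x hx => ?_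
  exact mul_le_mul_of_nonneg_right hx.le (hnonneg x)

lemma stdCDF_stdQuantile {p : ℝ} (hp0 : 0 < p) (hp1 : p < 1) : stdCDF (stdQuantile p) = p :=
  cdf_sInf_setOf_le_cdf hp0 hp1

lemma stdCDF_zero : stdCDF 0 = 1 / 2 :=
  cdf_zero_of_map_neg (by simpa using gaussianReal_map_neg (μ := 0) (v := 1))

lemma stdQuantile_pos {p : ℝ} (hp : 1 / 2 < p) (hp1 : p < 1) : 0 < stdQuantile p := by
  by_contra! hq
  have := monotone_cdf (gaussianReal 0 1) hq
  rw [← stdCDF, ← stdCDF, stdCDF_stdQuantile (by linarith) hp1, stdCDF_zero] at this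
  linarith

lemma gaussianReal_map_mul_add {μ σ : ℝ} {v : ℝ≥0} (hv : (v : ℝ) = σ ^ 2) :
    (gaussianReal 0 1).map (fun x => σ * x + μ) = gaussianReal μ v := by
  have hscale : (gaussianReal 0 1).map (σ * ·) = gaussianReal 0 v := by
    rw [gaussianReal_map_const_mul, mul_zero, mul_one]
    congr
    exact hv.symm
  have hcomp : (fun x : ℝ => σ * x + μ) = (· + μ) ∘ (σ * ·) := rfl
  rw [hcomp, ← Measure.map_map (measurable_add_const μ) (measurable_const_mul σ), hscale,
    gaussianReal_map_add_const, zero_add]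

lemma measureReal_gaussianReal_Iic {μ σ : ℝ} {v : ℝ≥0} (hσ : 0 < σ) (hv : (v : ℝ) = σ ^ 2)
    (x : ℝ) : (gaussianReal μ v).real (Iic x) = stdCDF ((x - μ) / σ) := by
  have hpre : (fun t => σ * t + μ) ⁻¹' Iic x = Iic ((x - μ) / σ) := by
    ext t
    simp only [mem_preimage, mem_Iic, le_div_iff₀ hσ]
    constructor <;> intro <;> linarith
  rw [← gaussianReal_map_mul_add hv,
    map_measureReal_apply (by fun_prop) measurableSet_Iic, hpre, stdCDF, cdf_eq_real]

/-- The deterministic CVaR reformulation implies the deterministic chance-constraint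
reformulation, and hence the chance constraint itself. -/
theorem cvar_reform_implies_chance_reform (μ σ ε : ℝ) (hσ : 0 < σ)
    (hε : 0 < ε) (hε2 : ε < 1 / 2)
    (h : μ + σ * (stdPDF (stdQuantile (1 - ε)) / ε) ≤ 0) :
    μ + σ * stdQuantile (1 - ε) ≤ 0 ∧
      ((gaussianReal μ ⟨σ ^ 2, sq_nonneg σ⟩) {t : ℝ | t ≤ 0}).toReal ≥ 1 - ε := by
  set q := stdQuantile (1 - ε)
  have hcdf : stdCDF q = 1 - ε := stdCDF_stdQuantile (by linarith) (by linarith)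
  have hq : 0 < q := stdQuantile_pos (by linarith) (by linarith)
  have hmills : q * ε ≤ stdPDF q := by
    simpa [← one_sub_stdCDF, hcdf] using mul_integral_Ioi_stdPDF_le hq.le
  have hchance : μ + σ * q ≤ 0 := by
    have hq_le : q ≤ stdPDF q / ε := (le_div_iff₀ hε).mpr hmills
    linarith [mul_le_mul_of_nonneg_left hq_le hσ.le]
  refine ⟨hchance, ?_⟩
  calc 1 - ε = stdCDF q := hcdf.symm
    _ ≤ stdCDF ((0 - μ) / σ) := monotone_cdf _ ((le_div_iff₀ hσ).mpr (by linarith))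
    _ = _ := (measureReal_gaussianReal_Iic hσ rfl 0).symm
end
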